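/- arXiv:1105.2474 — 2 statements merged into one kernel-verified Lean document; each statement's English description precedes it below -/
import Mathlib

section
/- Let A and B be real 3×3 matrices, let u, v ∈ ℝ³ be linearly independent, let ν = (u × v)/‖u × v‖, and let P = I₃ − ν νᵀ be the orthogonal projection onto the plane spanned by u and v. Define w(s,t) = ((I + sA + tB)u) × ((I + sA + tB)v) and N(s,t) = w(s,t)/‖w(s,t)‖ for (s,t) in a neighborhood of (0,0). Then the mixed second partial derivative ∂²N/∂s∂t at (0,0) exists and equals P Bᵀ P Aᵀ ν + P Aᵀ P Bᵀ ν − ⟨P Aᵀ ν, P Bᵀ ν⟩ ν. -/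
/-!
Write `N(s, t) = n(w(s, t))` with `n x = x / |x|`. Then `∂ₜN(s, 0) = Dn(w(s, 0))[∂ₜw(s, 0)]`, and
differentiating in `s` gives `Dn(c)[∂ₛ∂ₜw] + D²n(c)[∂ₜw, ∂ₛw]` at `c = u × v`. Both terms are
invariant under rescaling `c = r ν`. The identity `(Au) × v + u × (Av) = tr A (u × v) - Aᵀ(u × v)`
and its bilinear analogue express the derivatives of `w` through `Aᵀν` and `Bᵀν`; the trace
terms are multiples of `ν` and cancel.
-/

open Matrix

theorem LinearMap.hasDerivAt_of_bilinear {E F G : Type*} [NormedAddCommGroup E]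
    [NormedSpace ℝ E] [FiniteDimensional ℝ E] [NormedAddCommGroup F] [NormedSpace ℝ F]
    [FiniteDimensional ℝ F] [NormedAddCommGroup G] [NormedSpace ℝ G]
    (b : E →ₗ[ℝ] F →ₗ[ℝ] G) {u : ℝ → E} {v : ℝ → F} {u' : E} {v' : F} {x : ℝ}
    (hu : HasDerivAt u u' x) (hv : HasDerivAt v v' x) :
    HasDerivAt (fun t => b (u t) (v t)) (b u' (v x) + b (u x) v') x := by
  rw [add_comm]
  exact b.toContinuousBilinearMap.hasDerivAt_of_bilinear (fun _ => hu) (fun _ => hv)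

theorem HasDerivAt.dotProduct {ι : Type*} [Fintype ι] {u v : ℝ → ι → ℝ} {u' v' : ι → ℝ}
    {x : ℝ} (hu : HasDerivAt u u' x) (hv : HasDerivAt v v' x) :
    HasDerivAt (fun t => u t ⬝ᵥ v t) (u' ⬝ᵥ v x + u x ⬝ᵥ v') x :=
  (dotProductBilin ℝ ℝ).hasDerivAt_of_bilinear hu hv

theorem HasDerivAt.crossProduct {u v : ℝ → Fin 3 → ℝ} {u' v' : Fin 3 → ℝ} {x : ℝ}
    (hu : HasDerivAt u u' x) (hv : HasDerivAt v v' x) :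
    HasDerivAt (fun t => u t ⨯₃ v t) (u' ⨯₃ v x + u x ⨯₃ v') x :=
  _root_.crossProduct.hasDerivAt_of_bilinear hu hv

theorem hasDerivAt_add_smul_mulVec {m n : Type*} [Fintype m] [Fintype n]
    (M A : Matrix m n ℝ) (u : n → ℝ) (s : ℝ) :
    HasDerivAt (fun s : ℝ => (M + s • A) *ᵥ u) (A *ᵥ u) s := by
  simp only [add_mulVec, smul_mulVec]
  simpa using ((hasDerivAt_id s).smul_const (A *ᵥ u)).const_add (M *ᵥ u)

theorem hasDerivAt_add_smul_mulVec_cross (M A : Matrix (Fin 3) (Fin 3) ℝ) (u v : Fin 3 → ℝ)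
    (s : ℝ) :
    HasDerivAt (fun s : ℝ => ((M + s • A) *ᵥ u) ⨯₃ ((M + s • A) *ᵥ v))
      ((A *ᵥ u) ⨯₃ ((M + s • A) *ᵥ v) + ((M + s • A) *ᵥ u) ⨯₃ (A *ᵥ v)) s :=
  (hasDerivAt_add_smul_mulVec M A u s).crossProduct (hasDerivAt_add_smul_mulVec M A v s)

section Normalize

variable {ι : Type*} [Fintype ι]

/-- `normalizeDeriv x h = Dn(x)[h]` and `normalizeDeriv₂ x h k = D²n(x)[h, k]` for the
normalization `n x = (√(x ⬝ᵥ x))⁻¹ • x`. -/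
noncomputable def normalizeDeriv (x h : ι → ℝ) : ι → ℝ :=
  (√(x ⬝ᵥ x))⁻¹ • (h - ((x ⬝ᵥ h) / (x ⬝ᵥ x)) • x)

noncomputable def normalizeDeriv₂ (x h k : ι → ℝ) : ι → ℝ :=
  (√(x ⬝ᵥ x) ^ 3)⁻¹ • ((3 * (x ⬝ᵥ h) * (x ⬝ᵥ k) / (x ⬝ᵥ x) - h ⬝ᵥ k) • x
    - (x ⬝ᵥ k) • h - (x ⬝ᵥ h) • k)

theorem dotProduct_self_pos {x : ι → ℝ} (hx : x ≠ 0) : 0 < x ⬝ᵥ x := by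
  simpa using dotProduct_self_star_pos_iff.2 hx

theorem inv_sqrt_smul_dotProduct_self {x : ι → ℝ} (hx : x ≠ 0) :
    (√(x ⬝ᵥ x))⁻¹ • x ⬝ᵥ (√(x ⬝ᵥ x))⁻¹ • x = 1 := by
  have hq := dotProduct_self_pos hx
  rw [smul_dotProduct, dotProduct_smul, smul_eq_mul, smul_eq_mul, ← mul_assoc, ← mul_inv,
    Real.mul_self_sqrt hq.le, inv_mul_cancel₀ hq.ne']

theorem normalizeDeriv_smul {r : ℝ} (hr : 0 < r) (x h : ι → ℝ) :
    normalizeDeriv (r • x) (r • h) = normalizeDeriv x h := by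
  simp only [normalizeDeriv, smul_dotProduct, dotProduct_smul, smul_eq_mul]
  rw [← mul_assoc, Real.sqrt_mul (mul_self_nonneg r), Real.sqrt_mul_self hr.le]
  match_scalars <;> field_simp

theorem normalizeDeriv₂_smul {r : ℝ} (hr : 0 < r) (x h k : ι → ℝ) :
    normalizeDeriv₂ (r • x) (r • h) (r • k) = normalizeDeriv₂ x h k := by
  simp only [normalizeDeriv₂, smul_dotProduct, dotProduct_smul, smul_eq_mul]
  rw [← mul_assoc, Real.sqrt_mul (mul_self_nonneg r), Real.sqrt_mul_self hr.le]
  match_scalars <;> field_simp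

theorem normalizeDeriv_of_dotProduct_self_eq_one {x : ι → ℝ} (hx : x ⬝ᵥ x = 1) (h : ι → ℝ) :
    normalizeDeriv x h = h - (x ⬝ᵥ h) • x := by
  simp [normalizeDeriv, hx]

theorem normalizeDeriv₂_of_dotProduct_self_eq_one {x : ι → ℝ} (hx : x ⬝ᵥ x = 1)
    (h k : ι → ℝ) :
    normalizeDeriv₂ x h k
      = (3 * (x ⬝ᵥ h) * (x ⬝ᵥ k) - h ⬝ᵥ k) • x - (x ⬝ᵥ k) • h - (x ⬝ᵥ h) • k := by
  simp [normalizeDeriv₂, hx]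

variable {γ η : ℝ → ι → ℝ} {γ' η' : ι → ℝ} {t : ℝ}

theorem HasDerivAt.sqrt_dotProduct_self (hγ : HasDerivAt γ γ' t) (h0 : γ t ≠ 0) :
    HasDerivAt (fun t => √(γ t ⬝ᵥ γ t)) ((γ t ⬝ᵥ γ') / √(γ t ⬝ᵥ γ t)) t := by
  convert (hγ.dotProduct hγ).sqrt (dotProduct_self_pos h0).ne' using 1
  rw [dotProduct_comm γ']
  ring

theorem HasDerivAt.normalize (hγ : HasDerivAt γ γ' t) (h0 : γ t ≠ 0) :
    HasDerivAt (fun t => (√(γ t ⬝ᵥ γ t))⁻¹ • γ t) (normalizeDeriv (γ t) γ') t := by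
  have hq := dotProduct_self_pos h0
  have hr := Real.sqrt_pos.2 hq
  refine (((hγ.sqrt_dotProduct_self h0).fun_inv hr.ne').fun_smul hγ).congr_deriv ?_
  rw [_root_.normalizeDeriv]
  have hsq := Real.sq_sqrt hq.le
  generalize √(γ t ⬝ᵥ γ t) = r at hr hsq ⊢
  rw [← hsq]
  match_scalars <;> field_simp

theorem HasDerivAt.normalizeDeriv (hγ : HasDerivAt γ γ' t) (hη : HasDerivAt η η' t)
    (h0 : γ t ≠ 0) :
    HasDerivAt (fun t => normalizeDeriv (γ t) (η t))
      (normalizeDeriv (γ t) η' + normalizeDeriv₂ (γ t) (η t) γ') t := by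
  have hq := dotProduct_self_pos h0
  have hr := Real.sqrt_pos.2 hq
  have hquot := (hγ.dotProduct hη).fun_div (hγ.dotProduct hγ) hq.ne'
  refine (((hγ.sqrt_dotProduct_self h0).fun_inv hr.ne').fun_smul
    (hη.fun_sub (hquot.fun_smul hγ))).congr_deriv ?_
  simp only [_root_.normalizeDeriv, normalizeDeriv₂]
  rw [dotProduct_comm γ' (γ t), dotProduct_comm γ' (η t), dotProduct_comm (η t) γ']
  have hsq := Real.sq_sqrt hq.le
  generalize √(γ t ⬝ᵥ γ t) = r at hr hsq ⊢
  rw [← hsq]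
  match_scalars <;> field_simp
  ring

end Normalize

theorem one_sub_vecMulVec_mulVec {ι : Type*} [Fintype ι] [DecidableEq ι] (ν x : ι → ℝ) :
    (1 - vecMulVec ν ν) *ᵥ x = x - (ν ⬝ᵥ x) • ν := by
  simp [sub_mulVec, vecMulVec_mulVec]

theorem normalizeDeriv_add_normalizeDeriv₂_of_dotProduct_self_eq_one {n : Type*} [Fintype n]
    [DecidableEq n] (A B : Matrix n n ℝ) {ν : n → ℝ} (hν : ν ⬝ᵥ ν = 1) (a b τ : ℝ) :
    normalizeDeriv ν (Bᵀ *ᵥ (Aᵀ *ᵥ ν) + Aᵀ *ᵥ (Bᵀ *ᵥ ν) - a • (Bᵀ *ᵥ ν) - b • (Aᵀ *ᵥ ν) + τ • ν)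
      + normalizeDeriv₂ ν (b • ν - Bᵀ *ᵥ ν) (a • ν - Aᵀ *ᵥ ν)
      = ((1 - vecMulVec ν ν) * Bᵀ * (1 - vecMulVec ν ν) * Aᵀ) *ᵥ ν
        + ((1 - vecMulVec ν ν) * Aᵀ * (1 - vecMulVec ν ν) * Bᵀ) *ᵥ ν
        - (((1 - vecMulVec ν ν) * Aᵀ) *ᵥ ν ⬝ᵥ ((1 - vecMulVec ν ν) * Bᵀ) *ᵥ ν) • ν := by
  rw [normalizeDeriv_of_dotProduct_self_eq_one hν, normalizeDeriv₂_of_dotProduct_self_eq_one hν]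
  simp only [← mulVec_mulVec, one_sub_vecMulVec_mulVec, mulVec_sub, mulVec_smul, dotProduct_add,
    dotProduct_sub, dotProduct_smul, sub_dotProduct, smul_dotProduct, smul_eq_mul, hν,
    dotProduct_comm _ ν, dotProduct_comm (Bᵀ *ᵥ ν) (Aᵀ *ᵥ ν)]
  match_scalars <;> ring

theorem mulVec_cross_add_cross_mulVec (A : Matrix (Fin 3) (Fin 3) ℝ) (u v : Fin 3 → ℝ) :
    (A *ᵥ u) ⨯₃ v + u ⨯₃ (A *ᵥ v) = A.trace • (u ⨯₃ v) - Aᵀ *ᵥ (u ⨯₃ v) := by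
  ext i
  fin_cases i <;>
  · simp [cross_apply, mulVec, dotProduct, Fin.sum_univ_three, trace]
    ring

theorem mulVec_cross_mulVec_add_mulVec_cross_mulVec (A B : Matrix (Fin 3) (Fin 3) ℝ)
    (u v : Fin 3 → ℝ) :
    (A *ᵥ u) ⨯₃ (B *ᵥ v) + (B *ᵥ u) ⨯₃ (A *ᵥ v)
      = Bᵀ *ᵥ (Aᵀ *ᵥ (u ⨯₃ v)) + Aᵀ *ᵥ (Bᵀ *ᵥ (u ⨯₃ v))
        - A.trace • (Bᵀ *ᵥ (u ⨯₃ v)) - B.trace • (Aᵀ *ᵥ (u ⨯₃ v))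
        + (A.trace * B.trace - (A * B).trace) • (u ⨯₃ v) := by
  ext i
  fin_cases i <;>
  · simp [cross_apply, mulVec, dotProduct, Fin.sum_univ_three, trace, mul_apply]
    ring

theorem normalizeDeriv_add_normalizeDeriv₂_crossProduct (A B : Matrix (Fin 3) (Fin 3) ℝ)
    {u v ν : Fin 3 → ℝ} {r : ℝ} (hr : 0 < r) (huv : u ⨯₃ v = r • ν) (hν : ν ⬝ᵥ ν = 1) :
    normalizeDeriv (u ⨯₃ v) ((B *ᵥ u) ⨯₃ (A *ᵥ v) + (A *ᵥ u) ⨯₃ (B *ᵥ v))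
      + normalizeDeriv₂ (u ⨯₃ v) ((B *ᵥ u) ⨯₃ v + u ⨯₃ (B *ᵥ v))
          ((A *ᵥ u) ⨯₃ v + u ⨯₃ (A *ᵥ v))
      = ((1 - vecMulVec ν ν) * Bᵀ * (1 - vecMulVec ν ν) * Aᵀ) *ᵥ ν
        + ((1 - vecMulVec ν ν) * Aᵀ * (1 - vecMulVec ν ν) * Bᵀ) *ᵥ ν
        - (((1 - vecMulVec ν ν) * Aᵀ) *ᵥ ν ⬝ᵥ ((1 - vecMulVec ν ν) * Bᵀ) *ᵥ ν) • ν := by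
  rw [add_comm ((B *ᵥ u) ⨯₃ _), mulVec_cross_mulVec_add_mulVec_cross_mulVec,
    mulVec_cross_add_cross_mulVec, mulVec_cross_add_cross_mulVec, huv]
  simp only [mulVec_smul, smul_comm _ r, ← smul_add, ← smul_sub]
  rw [normalizeDeriv_smul hr, normalizeDeriv₂_smul hr]
  exact normalizeDeriv_add_normalizeDeriv₂_of_dotProduct_self_eq_one A B hν _ _ _

open Matrix in
/-- Pointwise (d = 3) form of the second-order shape derivative of the unit normal
at `r = 0`: the mixed second partial `∂²N/∂s∂t(0,0)` of `N(s,t) = w(s,t)/‖w(s,t)‖`,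
`w(s,t) = ((I+sA+tB)u) × ((I+sA+tB)v)`, equals
`PBᵀPAᵀν + PAᵀPBᵀν − ⟨PAᵀν, PBᵀν⟩ν`. -/
theorem stmt7 (A B : Matrix (Fin 3) (Fin 3) ℝ) (u v : Fin 3 → ℝ)
    (huv : LinearIndependent ℝ ![u, v])
    (ν : Fin 3 → ℝ)
    (hν : ν = (Real.sqrt (crossProduct u v ⬝ᵥ crossProduct u v))⁻¹ • crossProduct u v)
    (P : Matrix (Fin 3) (Fin 3) ℝ) (hP : P = 1 - vecMulVec ν ν)
    (w : ℝ → ℝ → Fin 3 → ℝ)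
    (hw : ∀ s t : ℝ, w s t =
      crossProduct ((1 + s • A + t • B).mulVec u) ((1 + s • A + t • B).mulVec v))
    (N : ℝ → ℝ → Fin 3 → ℝ)
    (hN : ∀ s t : ℝ, N s t = (Real.sqrt (w s t ⬝ᵥ w s t))⁻¹ • w s t) :
    HasDerivAt (fun s : ℝ => deriv (fun t : ℝ => N s t) 0)
      ((P * Bᵀ * P * Aᵀ).mulVec ν + (P * Aᵀ * P * Bᵀ).mulVec ν
        - ((P * Aᵀ).mulVec ν ⬝ᵥ (P * Bᵀ).mulVec ν) • ν) 0 := by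
  set η : ℝ → Fin 3 → ℝ := fun s =>
    (B *ᵥ u) ⨯₃ ((1 + s • A) *ᵥ v) + ((1 + s • A) *ᵥ u) ⨯₃ (B *ᵥ v)
  have hNt (s : ℝ) (hs : w s 0 ≠ 0) :
      HasDerivAt (fun t => N s t) (normalizeDeriv (w s 0) (η s)) 0 := by
    have hwt := hasDerivAt_add_smul_mulVec_cross (1 + s • A) B u v 0
    simp only [← hw, zero_smul, add_zero] at hwt
    simpa only [hN] using hwt.normalize hs
  have hγ : HasDerivAt (fun s => w s 0) ((A *ᵥ u) ⨯₃ v + u ⨯₃ (A *ᵥ v)) 0 := by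
    simpa [hw] using hasDerivAt_add_smul_mulVec_cross 1 A u v 0
  have hη : HasDerivAt η ((B *ᵥ u) ⨯₃ (A *ᵥ v) + (A *ᵥ u) ⨯₃ (B *ᵥ v)) 0 := by
    simpa using ((hasDerivAt_const 0 (B *ᵥ u)).crossProduct
      (hasDerivAt_add_smul_mulVec 1 A v 0)).fun_add
      ((hasDerivAt_add_smul_mulVec 1 A u 0).crossProduct (hasDerivAt_const 0 (B *ᵥ v)))
  have hc : w 0 0 = u ⨯₃ v := by simp [hw]
  have hc0 : w 0 0 ≠ 0 := hc ▸ crossProduct_ne_zero_iff_linearIndependent.2 huv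
  have hderiv : (fun s => deriv (fun t => N s t) 0) =ᶠ[nhds 0]
      fun s => normalizeDeriv (w s 0) (η s) :=
    (hγ.continuousAt.eventually_ne hc0).mono fun s hs => (hNt s hs).deriv
  refine ((hγ.normalizeDeriv hη hc0).congr_of_eventuallyEq hderiv).congr_deriv ?_
  rw [hc] at hc0
  have hr := Real.sqrt_pos.2 (dotProduct_self_pos hc0)
  have hcν : u ⨯₃ v = √(u ⨯₃ v ⬝ᵥ u ⨯₃ v) • ν := by
    rw [hν, smul_smul, mul_inv_cancel₀ hr.ne', one_smul]
  subst hP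
  simp only [hc, η, zero_smul, add_zero, one_mulVec]
  exact normalizeDeriv_add_normalizeDeriv₂_crossProduct A B hr hcν
    (hν ▸ inv_sqrt_smul_dotProduct_self hc0)
end

section
/- Let A and N be real 3×3 matrices and let τ₁, τ₂ ∈ ℝ³ be linearly independent. Set ν = (τ₁ × τ₂)/‖τ₁ × τ₂‖, P = I₃ − ν νᵀ, and for t near 0 define n(t) = (((I + tA)τ₁) × ((I + tA)τ₂)) / ‖((I + tA)τ₁) × ((I + tA)τ₂)‖, P(t) = I₃ − n(t) n(t)ᵀ, and D(t) = tr( P(t) ((I + tA)ᵀ)⁻¹ N ). Then D is differentiable at t = 0 and D′(0) = −tr( P Aᵀ P N ) + ⟨P N ν, P Aᵀ ν⟩. -/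
/-!
The unit normal is `n(t) = c(t)/|c(t)|` with `c(t) = (I+tA)τ₁ × (I+tA)τ₂`, and the cofactor
identity `Aτ₁ × τ₂ + τ₁ × Aτ₂ = tr(A) c - Aᵀc` gives `c'(0) = tr(A) c(0) - Aᵀ c(0)`. Differentiating
the normalisation, the `tr(A)` part is killed by `P`, so `n'(0) = -w` with `w = P Aᵀ ν`, and
`P'(0) = w νᵀ + ν wᵀ`. Since `((I+tA)ᵀ)⁻¹ = I - tAᵀ + o(t)`, the product rule gives
`D'(0) = tr((w νᵀ + ν wᵀ - P Aᵀ) N)`; splitting `Aᵀ N = Aᵀ (P + ν νᵀ) N` and using that `P` is a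
symmetric idempotent turns this into the stated formula.
-/

open Matrix

theorem LinearMap.hasDerivAt_of_bilinear_of_finiteDimensional
    {𝕜 : Type*} [NontriviallyNormedField 𝕜] [CompleteSpace 𝕜]
    {E F G : Type*} [NormedAddCommGroup E] [NormedSpace 𝕜 E] [FiniteDimensional 𝕜 E]
    [NormedAddCommGroup F] [NormedSpace 𝕜 F] [FiniteDimensional 𝕜 F]
    [NormedAddCommGroup G] [NormedSpace 𝕜 G]
    (B : E →ₗ[𝕜] F →ₗ[𝕜] G) {u : 𝕜 → E} {v : 𝕜 → F} {u' : E} {v' : F} {x : 𝕜}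
    (hu : HasDerivAt u u' x) (hv : HasDerivAt v v' x) :
    HasDerivAt (fun x ↦ B (u x) (v x)) (B (u x) v' + B u' (v x)) x :=
  B.toContinuousBilinearMap.hasDerivAt_of_bilinear (fun _ ↦ hu) (fun _ ↦ hv)

theorem crossProduct_mulVec_add_mulVec_crossProduct {R : Type*} [CommRing R]
    (A : Matrix (Fin 3) (Fin 3) R) (u v : Fin 3 → R) :
    u ⨯₃ (A *ᵥ v) + (A *ᵥ u) ⨯₃ v = A.trace • (u ⨯₃ v) - Aᵀ *ᵥ (u ⨯₃ v) := by
  ext i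
  fin_cases i <;>
    simp [cross_apply, mulVec, dotProduct, trace, Fin.sum_univ_three] <;> ring

theorem hasDerivAt_one_add_smul_mulVec {𝕜 ι : Type*} [NontriviallyNormedField 𝕜] [Fintype ι]
    [DecidableEq ι] (A : Matrix ι ι 𝕜) (v : ι → 𝕜) (t : 𝕜) :
    HasDerivAt (fun s : 𝕜 ↦ (1 + s • A) *ᵥ v) (A *ᵥ v) t := by
  simpa [add_mulVec, smul_mulVec] using ((hasDerivAt_id t).smul_const (A *ᵥ v)).const_add v

section OrthProj

variable {ι : Type*}

def orthProj [DecidableEq ι] (ν : ι → ℝ) : Matrix ι ι ℝ := 1 - vecMulVec ν ν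

theorem orthProj_transpose [DecidableEq ι] (ν : ι → ℝ) : (orthProj ν)ᵀ = orthProj ν := by
  simp [orthProj]

variable [Fintype ι]

noncomputable def normalized (c : ι → ℝ) : ι → ℝ := (√(c ⬝ᵥ c))⁻¹ • c

theorem normalized_dotProduct_self {c : ι → ℝ} (hc : c ≠ 0) :
    normalized c ⬝ᵥ normalized c = 1 := by
  have hq : 0 < c ⬝ᵥ c := by simpa using dotProduct_star_self_pos_iff.mpr hc
  rw [normalized, smul_dotProduct, dotProduct_smul, smul_eq_mul, smul_eq_mul, ← mul_assoc,
    ← mul_inv, Real.mul_self_sqrt hq.le, inv_mul_cancel₀ hq.ne']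

variable [DecidableEq ι] {ν : ι → ℝ}

theorem orthProj_mulVec (ν v : ι → ℝ) : orthProj ν *ᵥ v = v - (ν ⬝ᵥ v) • ν := by
  simp [orthProj, sub_mulVec, vecMulVec_mulVec]

theorem orthProj_mulVec_self (hν : ν ⬝ᵥ ν = 1) : orthProj ν *ᵥ ν = 0 := by
  simp [orthProj_mulVec, hν]

theorem orthProj_mul_self (hν : ν ⬝ᵥ ν = 1) : orthProj ν * orthProj ν = orthProj ν := by
  simp [orthProj, sub_mul, mul_sub, vecMulVec_mul_vecMulVec, hν]

theorem orthProj_mulVec_smul_sub_mulVec (hν : ν ⬝ᵥ ν = 1) (a : ℝ) (B : Matrix ι ι ℝ) :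
    orthProj ν *ᵥ (a • ν - B *ᵥ ν) = -((orthProj ν * B) *ᵥ ν) := by
  rw [mulVec_sub, mulVec_smul, orthProj_mulVec_self hν, mulVec_mulVec]
  simp

theorem inv_sqrt_smul_orthProj_normalized_mulVec {c : ι → ℝ} (hc : c ≠ 0) (a : ℝ)
    (B : Matrix ι ι ℝ) :
    (√(c ⬝ᵥ c))⁻¹ • orthProj (normalized c) *ᵥ (a • c - B *ᵥ c)
      = -((orthProj (normalized c) * B) *ᵥ normalized c) := by
  rw [← mulVec_smul, smul_sub, smul_comm, ← mulVec_smul, ← normalized,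
    orthProj_mulVec_smul_sub_mulVec (normalized_dotProduct_self hc)]

theorem trace_orthProj_variation (hν : ν ⬝ᵥ ν = 1) (B N : Matrix ι ι ℝ) :
    ((vecMulVec ((orthProj ν * B) *ᵥ ν) ν + vecMulVec ν ((orthProj ν * B) *ᵥ ν)
        - orthProj ν * B) * N).trace
      = -(orthProj ν * B * orthProj ν * N).trace
        + (orthProj ν * N) *ᵥ ν ⬝ᵥ (orthProj ν * B) *ᵥ ν := by
  set P := orthProj ν
  set w := (P * B) *ᵥ ν
  have hsplit : P * B * N = P * B * P * N + vecMulVec w ν * N := by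
    rw [← mul_vecMulVec, ← Matrix.add_mul, ← Matrix.mul_add]
    simp [P, orthProj]
  have hw : w ᵥ* P = w := by
    rw [← mulVec_transpose, orthProj_transpose, mulVec_mulVec, ← Matrix.mul_assoc,
      orthProj_mul_self hν]
  have hdot : (P * N) *ᵥ ν ⬝ᵥ w = (vecMulVec ν w * N).trace := by
    rw [vecMulVec_mul, trace_vecMulVec, ← mulVec_mulVec, dotProduct_comm, dotProduct_mulVec, hw,
      dotProduct_mulVec, dotProduct_comm]
  rw [Matrix.sub_mul, Matrix.add_mul, hsplit, trace_sub, trace_add, trace_add, hdot]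
  ring

theorem HasDerivAt.normalized {c : ℝ → ι → ℝ} {c' : ι → ℝ} {t : ℝ}
    (hc : HasDerivAt c c' t) (h0 : c t ≠ 0) :
    HasDerivAt (fun s ↦ normalized (c s))
      ((√(c t ⬝ᵥ c t))⁻¹ • orthProj (normalized (c t)) *ᵥ c') t := by
  have hpos : 0 < c t ⬝ᵥ c t := by simpa using dotProduct_star_self_pos_iff.mpr h0
  have hq := (dotProductBilin ℝ ℝ).hasDerivAt_of_bilinear_of_finiteDimensional hc hc
  refine (((hq.sqrt hpos.ne').inv (Real.sqrt_pos.mpr hpos).ne').smul hc).congr_deriv ?_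
  simp only [orthProj_mulVec, _root_.normalized, dotProductBilin_apply_apply, smul_dotProduct,
    dotProduct_comm c', Pi.inv_apply, smul_eq_mul, smul_sub, smul_smul]
  module

end OrthProj

section MatrixCalculus

attribute [local instance] Matrix.linftyOpNormedRing Matrix.linftyOpNormedAlgebra

variable {𝕜 ι : Type*} [NontriviallyNormedField 𝕜] [CompleteSpace 𝕜] [Fintype ι] [DecidableEq ι]

theorem hasDerivAt_orthProj {u : ℝ → ι → ℝ} {u' : ι → ℝ} {t : ℝ} (hu : HasDerivAt u u' t) :
    HasDerivAt (fun s ↦ orthProj (u s)) (-(vecMulVec (u t) u' + vecMulVec u' (u t))) t :=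
  ((vecMulVecBilin ℝ ℝ).hasDerivAt_of_bilinear_of_finiteDimensional hu hu).const_sub 1

theorem hasDerivAt_inv_one_add_smul (B : Matrix ι ι 𝕜) :
    HasDerivAt (fun t : 𝕜 ↦ (1 + t • B)⁻¹) (-B) 0 := by
  -- completeness for the uniformity of the operator norm, not the default one on matrices
  have : @CompleteSpace (Matrix ι ι 𝕜) PseudoMetricSpace.toUniformSpace :=
    FiniteDimensional.complete 𝕜 _
  have hB : HasDerivAt (fun t : 𝕜 ↦ 1 + t • B) B 0 :=
    (((hasDerivAt_id 0).smul_const B).const_add 1).congr_deriv (one_smul 𝕜 B)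
  have hinv := hasFDerivAt_ringInverse (𝕜 := 𝕜) (1 : (Matrix ι ι 𝕜)ˣ)
  rw [show ((1 : (Matrix ι ι 𝕜)ˣ) : Matrix ι ι 𝕜) = 1 + (0 : 𝕜) • B by simp] at hinv
  have := (hinv.comp_hasDerivAt (0 : 𝕜) hB).congr_deriv (by simp : _ = -B)
  simp only [Function.comp_def, ← nonsing_inv_eq_ringInverse] at this
  exact this

theorem HasDerivAt.trace_mul_mul {f g : 𝕜 → Matrix ι ι 𝕜} {f' g' : Matrix ι ι 𝕜} {t : 𝕜}
    (hf : HasDerivAt f f' t) (hg : HasDerivAt g g' t) (N : Matrix ι ι 𝕜) :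
    HasDerivAt (fun s ↦ (f s * g s * N).trace) ((f' * g t + f t * g') * N).trace t :=
  (traceLinearMap ι 𝕜 𝕜).toContinuousLinearMap.hasFDerivAt.comp_hasDerivAt t
    ((hf.mul hg).mul_const N)

end MatrixCalculus

open Matrix in
/-- Pointwise (d = 3) form of Theorem (D) of the paper at `r = 0`: the transported
surface divergence `D(t) = tr(P(t)((I+tA)ᵀ)⁻¹N)` satisfies
`D′(0) = −tr(PAᵀPN) + ⟨PNν, PAᵀν⟩`. -/
theorem stmt14 (A N : Matrix (Fin 3) (Fin 3) ℝ)
    (τ₁ τ₂ : Fin 3 → ℝ) (hτ : LinearIndependent ℝ ![τ₁, τ₂])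
    (ν : Fin 3 → ℝ)
    (hν : ν = (Real.sqrt (crossProduct τ₁ τ₂ ⬝ᵥ crossProduct τ₁ τ₂))⁻¹ • crossProduct τ₁ τ₂)
    (P : Matrix (Fin 3) (Fin 3) ℝ) (hP : P = 1 - vecMulVec ν ν)
    (n : ℝ → Fin 3 → ℝ)
    (hn : ∀ t : ℝ, n t =
      (Real.sqrt (crossProduct ((1 + t • A).mulVec τ₁) ((1 + t • A).mulVec τ₂) ⬝ᵥ
        crossProduct ((1 + t • A).mulVec τ₁) ((1 + t • A).mulVec τ₂)))⁻¹ •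
        crossProduct ((1 + t • A).mulVec τ₁) ((1 + t • A).mulVec τ₂))
    (Pt : ℝ → Matrix (Fin 3) (Fin 3) ℝ) (hPt : ∀ t, Pt t = 1 - vecMulVec (n t) (n t))
    (D : ℝ → ℝ)
    (hD : ∀ t : ℝ, D t = (Pt t * ((1 + t • A)ᵀ)⁻¹ * N).trace) :
    HasDerivAt D
      (-(P * Aᵀ * P * N).trace + (P * N).mulVec ν ⬝ᵥ (P * Aᵀ).mulVec ν) 0 := by
  set c : ℝ → Fin 3 → ℝ := fun t ↦ ((1 + t • A) *ᵥ τ₁) ⨯₃ ((1 + t • A) *ᵥ τ₂)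
  have hc0 : c 0 = τ₁ ⨯₃ τ₂ := by simp [c]
  have hne : c 0 ≠ 0 := hc0 ▸ crossProduct_ne_zero_iff_linearIndependent.mpr hτ
  have hν : ν = normalized (c 0) := hc0 ▸ hν
  obtain rfl : P = orthProj ν := hP
  have hc : HasDerivAt c (A.trace • c 0 - Aᵀ *ᵥ c 0) 0 := by
    have := crossProduct.hasDerivAt_of_bilinear_of_finiteDimensional
      (hasDerivAt_one_add_smul_mulVec A τ₁ 0) (hasDerivAt_one_add_smul_mulVec A τ₂ 0)
    simp only [zero_smul, add_zero, one_mulVec, crossProduct_mulVec_add_mulVec_crossProduct] at this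
    rwa [hc0]
  obtain rfl : n = fun t ↦ normalized (c t) := funext hn
  obtain rfl : Pt = fun t ↦ orthProj (normalized (c t)) := funext hPt
  obtain rfl : D = fun t ↦ (orthProj (normalized (c t)) * ((1 + t • A)ᵀ)⁻¹ * N).trace :=
    funext hD
  have hn' : HasDerivAt (fun t ↦ normalized (c t)) (-((orthProj ν * Aᵀ) *ᵥ ν)) 0 := by
    have := hc.normalized hne
    rwa [inv_sqrt_smul_orthProj_normalized_mulVec hne, ← hν] at this
  have hinv : HasDerivAt (fun t : ℝ ↦ ((1 + t • A)ᵀ)⁻¹) (-Aᵀ) 0 := by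
    simpa only [transpose_add, transpose_one, transpose_smul] using hasDerivAt_inv_one_add_smul Aᵀ
  refine ((hasDerivAt_orthProj hn').trace_mul_mul hinv N).congr_deriv ?_
  rw [← hν]
  simp only [vecMulVec_neg, neg_vecMulVec, neg_add_rev, neg_neg, zero_smul, add_zero,
    transpose_one, inv_one, mul_one, mul_neg]
  rw [← sub_eq_add_neg]
  exact trace_orthProj_variation (hν ▸ normalized_dotProduct_self hne) Aᵀ N
end
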